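/- arXiv:2003.10957 — 7 statements merged into one kernel-verified Lean document; each statement's English description precedes it below -/
import Mathlib

section
/- Let L be a non-degenerate even lattice and r ∈ L a primitive vector with r² ≠ 0 such that the reflection σ_r is an isometry of L. Then the determinant of the orthogonal complement r⊥ in L satisfies det(r⊥) = det(L)·r²/div(r)² (up to sign conventions). -/
/-!
Pick `y` with `B r y = div(r)`. Every value of `B r` is a multiple of `B r y`, so `L = r⊥ ⊕ ℤ y`
and `y` followed by a basis of `r⊥` is a basis `d` of `L`; over `ℤ` all bases of `L` have the
same Gram determinant. Replacing `y` by `r` in `d` multiplies the Gram determinant by `k²`,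
where `k` is the `y`-coordinate of `r`, so that `r² = k · div(r)`. The resulting family
`(r, basis of r⊥)` has a block triangular Gram matrix of determinant `r² · det(r⊥)`. Hence
`r² · det(r⊥) = k² · det(L)`; multiply by `div(r)²` and cancel one factor `r²`.
-/

open Module LinearMap
open scoped Matrix

namespace LinearMap.BilinForm

variable {R M ι ι' : Type*} [CommRing R] [AddCommGroup M] [Module R M]

def gram (B : LinearMap.BilinForm R M) (v : ι → M) : Matrix ι ι R :=
  Matrix.of fun i j => B (v i) (v j)

variable (B : LinearMap.BilinForm R M)

theorem gram_basis_eq_toMatrix [Fintype ι] [DecidableEq ι] (b : Basis ι R M) :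
    gram B b = toMatrix b B := by
  ext i j
  rw [toMatrix_apply]
  rfl

theorem gram_eq_transpose_mul_toMatrix_mul [Fintype ι] [DecidableEq ι] (b : Basis ι R M)
    (v : ι' → M) : gram B v = (b.toMatrix v)ᵀ * toMatrix b B * b.toMatrix v := by
  ext i j
  conv_lhs => rw [gram, Matrix.of_apply, ← b.sum_repr (v i), ← b.sum_repr (v j)]
  simp only [map_sum, map_smul, LinearMap.sum_apply, LinearMap.smul_apply, smul_eq_mul,
    Matrix.mul_apply, Matrix.transpose_apply, Basis.toMatrix_apply, toMatrix_apply,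
    Finset.mul_sum, mul_comm, mul_left_comm]

theorem det_gram [Fintype ι] [DecidableEq ι] (b : Basis ι R M) (v : ι → M) :
    (gram B v).det = (b.toMatrix v).det ^ 2 * (gram B b).det := by
  rw [gram_eq_transpose_mul_toMatrix_mul B b, Matrix.det_mul, Matrix.det_mul,
    Matrix.det_transpose, gram_basis_eq_toMatrix]
  ring

theorem det_gram_finCons {n : ℕ} {x : M} {v : Fin n → M} (h : ∀ j, B x (v j) = 0) :
    (gram B (Fin.cons x v : Fin (n + 1) → M)).det = B x x * (gram B v).det := by
  rw [Matrix.det_succ_row_zero, Fin.sum_univ_succ]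
  simp [gram, h]
  rfl

theorem det_gram_basis_eq_of_int {M : Type*} [AddCommGroup M] [Module ℤ M] [Fintype ι]
    [DecidableEq ι] [Fintype ι'] [DecidableEq ι'] (B : LinearMap.BilinForm ℤ M)
    (b : Basis ι ℤ M) (b' : Basis ι' ℤ M) : (gram B b').det = (gram B b).det := by
  set e := b'.indexEquiv b
  have hreindex : gram B (b'.reindex e) = (gram B b').submatrix e.symm e.symm := by
    ext i j
    simp [gram]
  have hunit : IsUnit (b.toMatrix (b'.reindex e)).det := IsUnit.of_mul_eq_one _ <| by
    rw [← Matrix.det_mul, Basis.toMatrix_mul_toMatrix_flip, Matrix.det_one]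
  rw [← Matrix.det_submatrix_equiv_self e.symm, ← hreindex, det_gram B b, Int.isUnit_sq hunit,
    one_mul]

end LinearMap.BilinForm

theorem Module.Basis.det_toMatrix_update {R M ι : Type*} [CommRing R] [AddCommGroup M]
    [Module R M] [Fintype ι] [DecidableEq ι] (e : Basis ι R M) (j : ι) (x : M) :
    (e.toMatrix (Function.update e j x)).det = e.repr x j := by
  rw [Basis.toMatrix_update, Basis.toMatrix_self, ← Matrix.cramer_apply, Matrix.cramer_one]
  rfl

namespace LinearMap

variable {R M : Type*} [CommRing R] [IsDomain R] [AddCommGroup M] [Module R M]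

noncomputable def basisFinConsKer (f : M →ₗ[R] R) {n : ℕ} (c : Basis (Fin n) R (ker f)) (y : M)
    (hy : f y ≠ 0) (hdvd : ∀ x, f y ∣ f x) : Basis (Fin (n + 1)) R M :=
  Basis.mkFinCons y c
    (fun a x hx h => by simpa [mem_ker.mp hx, hy] using congrArg f h)
    (fun z => by
      obtain ⟨t, ht⟩ := hdvd z
      exact ⟨-t, by simp [ht, mul_comm]⟩)

variable {f : M →ₗ[R] R} {n : ℕ} {c : Basis (Fin n) R (ker f)} {y : M} {hy : f y ≠ 0}
  {hdvd : ∀ x, f y ∣ f x}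

theorem coe_basisFinConsKer :
    ⇑(basisFinConsKer f c y hy hdvd) = Fin.cons y fun i => (c i : M) :=
  Basis.coe_mkFinCons _ _ _ _

theorem apply_eq_repr_basisFinConsKer_zero_mul (x : M) :
    f x = (basisFinConsKer f c y hy hdvd).repr x 0 * f y := by
  conv_lhs => rw [← (basisFinConsKer f c y hy hdvd).sum_repr x]
  simp [Fin.sum_univ_succ, coe_basisFinConsKer]

end LinearMap

open LinearMap.BilinForm

theorem stmt1_general (M : Type*) [AddCommGroup M] [Module ℤ M]
    (B : M →ₗ[ℤ] M →ₗ[ℤ] ℤ)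
    (n : ℕ) (b : Module.Basis (Fin n) ℤ M)
    (r : M)
    (hr2 : B r r ≠ 0)
    (m : ℤ) (hm : 0 < m)
    (hdiv : ∀ l : M, m ∣ B r l)
    (hgen : ∃ l : M, B r l = m)
    (c : Module.Basis (Fin (n - 1)) ℤ (LinearMap.ker (B r))) :
    ∃ ε : ℤ, (ε = 1 ∨ ε = -1) ∧
      (Matrix.det (Matrix.of fun i j => B ((c i) : M) ((c j) : M))) * m ^ 2 =
        ε * (Matrix.det (Matrix.of fun i j => B (b i) (b j))) * B r r := by
  obtain ⟨y, rfl⟩ := hgen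
  -- `c` is a basis for the structure `AddCommGroup.toIntModule` on `ker (B r)`, which is not
  -- reducibly the submodule structure; transport it along the identity.
  let c' := @Basis.map _ _ _ _ _ _ _ _ (ker (B r)).module c (AddEquiv.refl _).toIntLinearEquiv
  set d := (B r).basisFinConsKer c' y hm.ne' hdiv
  have hd : ⇑d = Fin.cons y fun j => (c j : M) := coe_basisFinConsKer
  set k := d.repr r 0
  have hk : B r r = k * B r y := apply_eq_repr_basisFinConsKer_zero_mul r
  have hgram : (gram B fun i => (c i : M)).det * B r r = k ^ 2 * (gram B b).det := by
    rw [mul_comm, ← det_gram_finCons B fun j => (c j).2, ← Fin.update_cons_zero (x := y), ← hd,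
      det_gram B d, d.det_toMatrix_update, det_gram_basis_eq_of_int B b d]
  refine ⟨1, Or.inl rfl, mul_right_cancel₀ hr2 ?_⟩
  change (gram B fun i => (c i : M)).det * _ * _ = 1 * (gram B b).det * _ * _
  linear_combination (B r y) ^ 2 * hgram - (gram B b).det * (B r r + k * B r y) * hk

/-- For a primitive reflective vector `r` (with `r² ≠ 0`) in a
non-degenerate even lattice `L` of rank `n`, the determinant of the orthogonal
complement `r⊥ = ker (B r)` satisfies `det(r⊥) = det(L) · r² / div(r)²`
up to sign; i.e. `det(r⊥) · div(r)² = ± det(L) · r²`, where determinants are the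
determinants of Gram matrices of bases. -/
theorem stmt1 (M : Type*) [AddCommGroup M] [Module ℤ M]
    (B : M →ₗ[ℤ] M →ₗ[ℤ] ℤ)
    (hsymm : ∀ x y : M, B x y = B y x)
    (heven : ∀ x : M, 2 ∣ B x x)
    (hnondeg : ∀ x : M, (∀ y : M, B x y = 0) → x = 0)
    (n : ℕ) (b : Module.Basis (Fin n) ℤ M)
    (r : M)
    (hprim : ∀ (k : ℤ) (x : M), k • x = r → IsUnit k)
    (hr2 : B r r ≠ 0)
    (hrefl : ∀ l : M, B r r ∣ 2 * B r l)
    (m : ℤ) (hm : 0 < m)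
    (hdiv : ∀ l : M, m ∣ B r l)
    (hgen : ∃ l : M, B r l = m)
    (c : Module.Basis (Fin (n - 1)) ℤ (LinearMap.ker (B r))) :
    ∃ ε : ℤ, (ε = 1 ∨ ε = -1) ∧
      (Matrix.det (Matrix.of fun i j => B ((c i) : M) ((c j) : M))) * m ^ 2 =
        ε * (Matrix.det (Matrix.of fun i j => B (b i) (b j))) * B r r :=
  stmt1_general M B n b r hr2 m hm hdiv hgen c
end

section
/- The 3×3 symmetric integer matrix [[0,2,1],[2,0,d],[1,d,-2]] defines an even lattice isometric to U ⊕ ⟨-2(2d+4)⟩ for every integer d ≥ 0, where U is the hyperbolic plane and ⟨-2k⟩ is the rank-one lattice generated by a vector of square -2k. -/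
/-- Two integral Gram matrices define isometric lattices iff they are congruent
by a matrix in `GL(n, ℤ)`. -/
def GramIsometric {n : ℕ} (G₁ G₂ : Matrix (Fin n) (Fin n) ℤ) : Prop :=
  ∃ P : Matrix (Fin n) (Fin n) ℤ, IsUnit P.det ∧ P.transpose * G₁ * P = G₂

/-- For every integer `d ≥ 0`, the lattice with Gram matrix
`[[0,2,1],[2,0,d],[1,d,-2]]` is isometric to `U ⊕ ⟨-2(2d+4)⟩`. -/
theorem stmt2 (d : ℤ) (hd : 0 ≤ d) :
    GramIsometric !![0, 2, 1; 2, 0, d; 1, d, -2]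
      !![0, 1, 0; 1, 0, 0; 0, 0, -2 * (2 * d + 4)] := by
  refine ⟨!![1, 1, -4 - d; 0, 0, 1; 0, 1, -2], ?_, ?_⟩
  · have : (!![1, 1, -4 - d; 0, 0, 1; 0, 1, -2] : Matrix (Fin 3) (Fin 3) ℤ).det = -1 := by
      simp [Matrix.det_fin_three, Matrix.vecHead, Matrix.vecTail]
    rw [this]; exact isUnit_one.neg
  · ext i j
    fin_cases i <;> fin_cases j <;>
      simp [Matrix.mul_apply, Matrix.transpose_apply, Fin.sum_univ_succ, Matrix.vecHead, Matrix.vecTail] <;> ring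
end

section
/- For every integer k ≥ 2, the 3×3 symmetric integer matrix [[0,1,1],[1,-2,k-2],[1,k-2,-2]] defines an even lattice isometric to U ⊕ ⟨-2k⟩. -/
/-- For every integer `k ≥ 2`, the lattice with Gram matrix
`[[0,1,1],[1,-2,k-2],[1,k-2,-2]]` is isometric to `U ⊕ ⟨-2k⟩`. -/
theorem stmt3 (k : ℤ) (hk : 2 ≤ k) :
    GramIsometric !![0, 1, 1; 1, -2, k - 2; 1, k - 2, -2]
      !![0, 1, 0; 1, 0, 0; 0, 0, -2 * k] := by
  refine ⟨!![1, 1, -k; 0, 1, -1; 0, 0, 1], ?_, ?_⟩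
  · simp [Matrix.det_fin_three, Matrix.vecHead, Matrix.vecTail]
  · ext i j
    fin_cases i <;> fin_cases j <;>
      simp [Matrix.mul_apply, Matrix.transpose, Fin.sum_univ_three, Matrix.vecHead, Matrix.vecTail] <;> ring
end

section
/- The lattice with Gram matrix [[2,1,0],[1,-2,0],[0,0,-2]] is isometric to U ⊕ ⟨-10⟩. -/
/-- the lattice [[2,1,0],[1,-2,0],[0,0,-2]] is isometric to U ⊕ ⟨-10⟩. -/
theorem stmt5 :
    GramIsometric !![2, 1, 0; 1, -2, 0; 0, 0, -2]
      !![0, 1, 0; 1, 0, 0; 0, 0, -10] := by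
  refine ⟨!![1, 1, 4; 0, 1, 2; 1, 1, 5], ?_, ?_⟩
  · simp [Matrix.det_fin_three, Matrix.vecHead, Matrix.vecTail]
  · ext i j
    fin_cases i <;> fin_cases j <;>
      simp [Matrix.mul_apply, Fin.sum_univ_succ, Matrix.transpose, Matrix.vecHead, Matrix.vecTail]
end

section
/- The lattice with Gram matrix [[6,2,1],[2,-2,2],[1,2,-2]] is isometric to U ⊕ ⟨-18⟩. -/
/-! The columns `e = (-1, 1, 0)`, `f = (-1, 1, 1)`, `g = (-6, 7, 4)` of the change-of-basis matrix
below form a hyperbolic pair `e² = f² = 0`, `e · f = 1` together with a vector `g ⊥ e, f` of norm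
`-18`; the matrix has determinant `1`, so they form a basis of the lattice. -/

def hyperbolicSplittingBasis : Matrix (Fin 3) (Fin 3) ℤ :=
  !![-1, -1, -6; 1, 1, 7; 0, 1, 4]

lemma hyperbolicSplittingBasis_det : hyperbolicSplittingBasis.det = 1 := by
  rw [hyperbolicSplittingBasis, Matrix.det_fin_three]
  rfl

lemma hyperbolicSplittingBasis_gram :
    hyperbolicSplittingBasis.transpose * !![6, 2, 1; 2, -2, 2; 1, 2, -2] *
        hyperbolicSplittingBasis = !![0, 1, 0; 1, 0, 0; 0, 0, -18] := by
  decide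

/-- the lattice [[6,2,1],[2,-2,2],[1,2,-2]] is isometric to U ⊕ ⟨-18⟩. -/
theorem stmt7 :
    GramIsometric !![6, 2, 1; 2, -2, 2; 1, 2, -2]
      !![0, 1, 0; 1, 0, 0; 0, 0, -18] :=
  ⟨hyperbolicSplittingBasis, hyperbolicSplittingBasis_det ▸ isUnit_one,
    hyperbolicSplittingBasis_gram⟩
end

section
/- The lattice with Gram matrix [[8,5,3],[5,-2,2],[3,2,-2]] is isometric to U ⊕ ⟨-128⟩. -/
/-- the lattice [[8,5,3],[5,-2,2],[3,2,-2]] is isometric to U ⊕ ⟨-128⟩. -/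
theorem stmt8 :
    GramIsometric !![8, 5, 3; 5, -2, 2; 3, 2, -2]
      !![0, 1, 0; 1, 0, 0; 0, 0, -128] := by
  refine ⟨!![1, 9, 48; 0, 2, 5; -1, -10, -51], ?_, ?_⟩
  · have : (!![1, 9, 48; 0, 2, 5; -1, -10, -51] : Matrix (Fin 3) (Fin 3) ℤ).det = -1 := by
      simp [Matrix.det_fin_three]
    rw [this]
    exact isUnit_one.neg
  · ext i j
    fin_cases i <;> fin_cases j <;>
      simp [Matrix.mul_apply, Fin.sum_univ_succ, Matrix.vecHead, Matrix.vecTail]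
end

section
/- Write l = αe + βf + v ∈ U ⊕ E₈(-1) with e² = f² = 0, (e,f) = 1, v ∈ E₈(-1), and l² = 2k > 0. If α ≠ β, α,β > √k and αβ < (5/4)k, then every root r = α'e + β'f + v' of U ⊕ E₈(-1) orthogonal to l (i.e., r² = -2 and (r,l) = 0) satisfies α' = β' = 0, so r ∈ E₈(-1). -/
/-!
Write `Q` for the positive definite `E₈` form, so that `r² = 2α'β' - Q(v')` and
`l² = 2αβ - Q(v)`. Cauchy–Schwarz for `Q` applied to `v', v`, together with `(r, l) = 0`, gives
`(α'β + β'α)² ≤ 4(α'β' + 1)(αβ - k)`. Since `(α'β + β'α)² ≥ 4α'β'αβ`, this forces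
`(α'β' + 1)k ≤ αβ < 5k/4`, and `r² = -2` gives `α'β' ≥ -1`, so `α'β' ∈ {-1, 0}`.
If `α'β' = -1` then `α'β + β'α = 0` with `β' = -α' = ∓1`, i.e. `α = β`.
If `α' = 0` then `β'²α² ≤ 4(αβ - k) < k < α²`, so `β' = 0`; symmetrically if `β' = 0`.
-/

/-- The Cartan matrix of `E₈` (Dynkin diagram: chain 0–1–2–3–4–5–6 with node 7
attached to node 4); it is the Gram matrix of the positive definite root
lattice `E₈` in a basis of simple roots. -/
def E8Cartan : Matrix (Fin 8) (Fin 8) ℤ :=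
  !![ 2,-1, 0, 0, 0, 0, 0, 0;
     -1, 2,-1, 0, 0, 0, 0, 0;
      0,-1, 2,-1, 0, 0, 0, 0;
      0, 0,-1, 2,-1, 0, 0, 0;
      0, 0, 0,-1, 2,-1, 0,-1;
      0, 0, 0, 0,-1, 2,-1, 0;
      0, 0, 0, 0, 0,-1, 2, 0;
      0, 0, 0, 0,-1, 0, 0, 2]

/-- The bilinear form of the lattice `U ⊕ E₈(-1)`, on elements written as
`αe + βf + v` with `e² = f² = 0`, `(e,f) = 1`, `v ∈ E₈(-1)`. -/
def UE8form (x y : ℤ × ℤ × (Fin 8 → ℤ)) : ℤ :=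
  x.1 * y.2.1 + x.2.1 * y.1 - dotProduct x.2.2 (E8Cartan.mulVec y.2.2)

open Matrix

theorem Matrix.IsSymm.sq_dotProduct_mulVec_le {R n : Type*} [CommRing R] [LinearOrder R]
    [IsStrictOrderedRing R] [Fintype n] [DecidableEq n] {A : Matrix n n R} (hA : A.IsSymm)
    (hpos : ∀ w, 0 ≤ w ⬝ᵥ A *ᵥ w) (x y : n → R) :
    (x ⬝ᵥ A *ᵥ y) ^ 2 ≤ (x ⬝ᵥ A *ᵥ x) * (y ⬝ᵥ A *ᵥ y) := by
  simpa only [toBilin'_apply'] using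
    (toBilin' A).apply_sq_le_of_symm (by simpa only [toBilin'_apply'] using hpos)
      (LinearMap.BilinForm.isSymm_iff.1 (isSymm_toBilin'_iff_isSymm.2 hA)) x y

theorem E8Cartan_isSymm : E8Cartan.IsSymm := by decide

theorem E8Cartan_dotProduct_mulVec_self_nonneg (w : Fin 8 → ℤ) : 0 ≤ w ⬝ᵥ E8Cartan *ᵥ w := by
  -- the `LDLᵀ` decomposition of the Cartan matrix, cleared of denominators
  have sos : 840 * (w ⬝ᵥ E8Cartan *ᵥ w) =
      420 * (2 * w 0 - w 1) ^ 2 + 140 * (3 * w 1 - 2 * w 2) ^ 2 + 70 * (4 * w 2 - 3 * w 3) ^ 2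
      + 42 * (5 * w 3 - 4 * w 4) ^ 2 + 28 * (6 * w 4 - 5 * w 5 - 5 * w 7) ^ 2
      + 20 * (7 * w 5 - 6 * w 6 - 5 * w 7) ^ 2 + 15 * (8 * w 6 - 5 * w 7) ^ 2 + 105 * w 7 ^ 2 := by
    simp only [dotProduct, mulVec, E8Cartan, of_apply, cons_val', cons_val_fin_one, Fin.sum_univ_eight,
      cons_val_zero, cons_val_one, cons_val]
    ring
  refine nonneg_of_mul_nonneg_right (a := 840) ?_ (by norm_num)
  rw [sos]
  positivity

theorem UE8form_apply (a b α β : ℤ) (w v : Fin 8 → ℤ) :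
    UE8form (a, b, w) (α, β, v) = a * β + b * α - w ⬝ᵥ E8Cartan *ᵥ v :=
  rfl

theorem UE8form_self (a b : ℤ) (v : Fin 8 → ℤ) :
    UE8form (a, b, v) (a, b, v) = 2 * (a * b) - v ⬝ᵥ E8Cartan *ᵥ v := by
  rw [UE8form_apply]
  ring

theorem UE8form_self_le_two_mul (a b : ℤ) (v : Fin 8 → ℤ) :
    UE8form (a, b, v) (a, b, v) ≤ 2 * (a * b) := by
  rw [UE8form_self]
  linarith [E8Cartan_dotProduct_mulVec_self_nonneg v]

theorem sq_sub_UE8form_le (a b α β : ℤ) (w v : Fin 8 → ℤ) :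
    (a * β + b * α - UE8form (a, b, w) (α, β, v)) ^ 2 ≤
      (2 * (a * b) - UE8form (a, b, w) (a, b, w)) *
        (2 * (α * β) - UE8form (α, β, v) (α, β, v)) := by
  rw [UE8form_self, UE8form_self, UE8form_apply, sub_sub_cancel, sub_sub_cancel, sub_sub_cancel]
  exact E8Cartan_isSymm.sq_dotProduct_mulVec_le E8Cartan_dotProduct_mulVec_self_nonneg w v

theorem Int.lt_sq_of_sqrt_lt {k a : ℤ} (h : √(k : ℝ) < a) : k < a ^ 2 := by
  have ha : (0 : ℝ) < a := (Real.sqrt_nonneg _).trans_lt h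
  exact_mod_cast (Real.sqrt_lt' ha).1 h

theorem add_one_mul_le_of_sq_le {a b α β k : ℤ}
    (h : (a * β + b * α) ^ 2 ≤ 4 * (a * b + 1) * (α * β - k)) : (a * b + 1) * k ≤ α * β := by
  nlinarith [sq_nonneg (a * β - b * α)]

theorem eq_of_mul_eq_neg_one {a b α β : ℤ} (hab : a * b = -1) (h : a * β + b * α = 0) :
    α = β := by
  rcases Int.eq_one_or_neg_one_of_mul_eq_neg_one' hab with ⟨rfl, rfl⟩ | ⟨rfl, rfl⟩ <;> linarith

theorem eq_zero_of_sq_mul_le {b α β k : ℤ} (hα : k < α ^ 2) (hprod : 4 * (α * β) < 5 * k)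
    (h : (b * α) ^ 2 ≤ 4 * (α * β - k)) : b = 0 := by
  have : b ^ 2 * α ^ 2 < 1 * α ^ 2 := by nlinarith
  have : b ^ 2 < 1 := lt_of_mul_lt_mul_right this (sq_nonneg α)
  nlinarith [sq_nonneg b]

/-- Let `l = αe + βf + v ∈ U ⊕ E₈(-1)` with `l² = 2k > 0`.
If `α ≠ β`, `α, β > √k` and `αβ < (5/4)k`, then every root
`r = α'e + β'f + v'` of `U ⊕ E₈(-1)` orthogonal to `l` (i.e. `r² = -2`,
`(r,l) = 0`) satisfies `α' = β' = 0`, hence lies in `E₈(-1)`. -/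
theorem stmt11 (k : ℤ) (hk : 0 < k)
    (α β : ℤ) (v : Fin 8 → ℤ)
    (hl2 : UE8form (α, β, v) (α, β, v) = 2 * k)
    (hαβ : α ≠ β)
    (hα : Real.sqrt (k : ℝ) < (α : ℝ))
    (hβ : Real.sqrt (k : ℝ) < (β : ℝ))
    (hprod : (α * β : ℝ) < 5 / 4 * (k : ℝ))
    (α' β' : ℤ) (v' : Fin 8 → ℤ)
    (hroot : UE8form (α', β', v') (α', β', v') = -2)
    (horth : UE8form (α', β', v') (α, β, v) = 0) :
    α' = 0 ∧ β' = 0 := by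
  have hα2 := Int.lt_sq_of_sqrt_lt hα
  have hβ2 := Int.lt_sq_of_sqrt_lt hβ
  have hprod4 : 4 * (α * β) < 5 * k := by
    have : (4 : ℝ) * (α * β) < 5 * k := by linarith
    exact_mod_cast this
  have hnonneg : -1 ≤ α' * β' := by linarith [UE8form_self_le_two_mul α' β' v']
  have hcs : (α' * β + β' * α) ^ 2 ≤ 4 * (α' * β' + 1) * (α * β - k) := by
    have := sq_sub_UE8form_le α' β' α β v' v
    rw [hroot, horth, hl2, sub_zero] at this
    linarith
  have hle := add_one_mul_le_of_sq_le hcs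
  obtain hab | hab : α' * β' = -1 ∨ α' * β' = 0 := by
    have : α' * β' < 1 := by nlinarith
    omega
  · refine absurd (eq_of_mul_eq_neg_one hab ?_) hαβ
    rw [hab] at hcs
    nlinarith [sq_nonneg (α' * β + β' * α)]
  · rcases mul_eq_zero.1 hab with rfl | rfl
    · refine ⟨rfl, eq_zero_of_sq_mul_le hα2 hprod4 ?_⟩
      simpa using hcs
    · refine ⟨eq_zero_of_sq_mul_le (β := α) hβ2 (by rwa [mul_comm β]) ?_, rfl⟩
      simpa [mul_comm] using hcs
end
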